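/- Let m be a positive integer, X = {⊥} ∪ {0,1}^m, and let P = {p₁, p₂} where p₁(⊥) = 0, p₂(⊥) = 1, and p₁(x) = p₂(x) = 1/2 for all x ∈ {0,1}^m. Let μ put probability mass 1/3 on ⊥ and spread the remaining 2/3 uniformly over {0,1}^m. Let D consist of, for every parity function f : {0,1}^m → {0,1} (i.e., f(x) = ⊕_{i∈S} x_i for some S ⊆ {1,…,m}), the distinguisher d with d(⊥) = 1 and d(x) = (−1)^{f(x)} for all x ∈ {0,1}^m. Then the distribution-specific agnostic OI sample complexity satisfies SAMP-DS-A(P, D, 1/8, 1/3, μ) ≥ m − 20. -/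

import Mathlib

open scoped ENNReal Pointwise

noncomputable section

namespace OI

/-- Expectation of a real-valued function under a probability mass function. -/
def pexp {α : Type*} (q : PMF α) (f : α → ℝ) : ℝ := ∑' a, (q a).toReal * f a

/-- Inner product of two functions w.r.t. the distribution `μ`. -/
def inn {X : Type*} (μ : PMF X) (f g : X → ℝ) : ℝ := pexp μ fun x => f x * g x

/-- Dual Minkowski (semi)norm of `f` w.r.t. the class `F`. -/
def dnorm {X : Type*} (μ : PMF X) (F : Set (X → ℝ)) (f : X → ℝ) : ℝ :=
  sSup ((fun g => |inn μ f g|) '' F)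

/-- `C` is an ε-covering of `G` w.r.t. the seminorm defined by `F`. -/
def IsCover {X : Type*} (μ : PMF X) (F G : Set (X → ℝ)) (ε : ℝ) (C : Set (X → ℝ)) : Prop :=
  C ⊆ G ∧ ∀ g ∈ G, ∃ c ∈ C, dnorm μ F (g - c) ≤ ε

/-- Covering number `N_{μ,F}(G, ε)` (`⊤` if no finite covering exists). -/
def covN {X : Type*} (μ : PMF X) (F G : Set (X → ℝ)) (ε : ℝ) : ℕ∞ :=
  ⨅ (C : Set (X → ℝ)) (_ : IsCover μ F G ε C), C.encard

/-- Base-2 logarithm of an extended natural number (junk value on `⊤`). -/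
def elog2 (N : ℕ∞) : ℝ := Real.logb 2 (N.toNat : ℝ)

/-- Bernoulli distribution on `Bool` with mean (the truncation to `[0,1]` of) `r`. -/
def bern (r : ℝ) : PMF Bool := PMF.bernoulli (min (Real.toNNReal r) 1) (min_le_right _ _)

/-- The distribution `μ_p` of individual-outcome pairs. -/
def exDist {X : Type*} (μ : PMF X) (p : X → ℝ) : PMF (X × Bool) :=
  μ.bind fun x => (bern (p x)).map fun o => (x, o)

/-- `n` i.i.d. samples from `q`. -/
def iid {α : Type*} (q : PMF α) : (n : ℕ) → PMF (Fin n → α)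
  | 0 => PMF.pure Fin.elim0
  | n + 1 => (iid q n).bind fun v => q.map fun a => Fin.cons a v

/-- Probability of an event under a PMF. -/
def prob {α : Type*} (q : PMF α) (E : Set α) : ℝ≥0∞ := q.toOuterMeasure E

/-- A (possibly randomized) `n`-sample learner. -/
abbrev Learner (X : Type*) (n : ℕ) := (Fin n → X × Bool) → PMF (X → ℝ)

/-- Distribution of the learner output on `n` i.i.d. samples from `μ_{p*}`. -/
def outDist {X : Type*} (μ : PMF X) (pstar : X → ℝ) {n : ℕ} (A : Learner X n) :
    PMF (X → ℝ) :=
  (iid (exDist μ pstar) n).bind A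

/-- `p` is a predictor, i.e. takes values in `[0,1]`. -/
def Predictor {X : Type*} (p : X → ℝ) : Prop := ∀ x, p x ∈ Set.Icc (0 : ℝ) 1

/-- `d` takes values in `[-1,1]`. -/
def Dist1 {X : Type*} (d : X → ℝ) : Prop := ∀ x, d x ∈ Set.Icc (-1 : ℝ) 1

/-- The class `[0,1]^X` of all predictors. -/
def allPred (X : Type*) : Set (X → ℝ) := {p | Predictor p}

/-- The learner `A` succeeds for target `pstar`: with probability at least `1 - δ` it outputs
a predictor whose maximum distinguishing advantage w.r.t. `pstar` over `D` is at most `ε`. -/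
def Achieves {X : Type*} (μ : PMF X) (D : Set (X → ℝ)) (ε δ : ℝ) (pstar : X → ℝ) {n : ℕ}
    (A : Learner X n) : Prop :=
  ENNReal.ofReal (1 - δ) ≤
    prob (outDist μ pstar A) {p | Predictor p ∧ dnorm μ D (p - pstar) ≤ ε}

/-- The agnostic benchmark `inf_{p' ∈ P} ‖p' - pstar‖_{μ,D}`. -/
def agTarget {X : Type*} (μ : PMF X) (P D : Set (X → ℝ)) (pstar : X → ℝ) : ℝ :=
  sInf ((fun p' => dnorm μ D (p' - pstar)) '' P)

/-- The learner `A` succeeds agnostically for target `pstar`. -/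
def AchievesAg {X : Type*} (μ : PMF X) (P D : Set (X → ℝ)) (ε δ : ℝ) (pstar : X → ℝ) {n : ℕ}
    (A : Learner X n) : Prop :=
  ENNReal.ofReal (1 - δ) ≤
    prob (outDist μ pstar A)
      {p | Predictor p ∧ dnorm μ D (p - pstar) ≤ agTarget μ P D pstar + ε}

/-- Distribution-specific realizable OI learner. -/
def DSRL {X : Type*} (μ : PMF X) (P D : Set (X → ℝ)) (ε δ : ℝ) (n : ℕ)
    (A : Learner X n) : Prop :=
  ∀ pstar ∈ P, Achieves μ D ε δ pstar A

/-- Distribution-specific agnostic OI learner. -/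
def DSAL {X : Type*} (μ : PMF X) (P D : Set (X → ℝ)) (ε δ : ℝ) (n : ℕ)
    (A : Learner X n) : Prop :=
  ∀ pstar : X → ℝ, Predictor pstar → AchievesAg μ P D ε δ pstar A

/-- Distribution-free realizable OI learner. -/
def DFRL {X : Type*} (P D : Set (X → ℝ)) (ε δ : ℝ) (n : ℕ) (A : Learner X n) : Prop :=
  ∀ μ : PMF X, DSRL μ P D ε δ n A

/-- Distribution-free agnostic OI learner. -/
def DFAL {X : Type*} (P D : Set (X → ℝ)) (ε δ : ℝ) (n : ℕ) (A : Learner X n) : Prop :=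
  ∀ μ : PMF X, DSAL μ P D ε δ n A

/-- Sample complexity of distribution-specific realizable OI. -/
def SAMPDSR {X : Type*} (μ : PMF X) (P D : Set (X → ℝ)) (ε δ : ℝ) : ℕ∞ :=
  ⨅ (n : ℕ) (_ : ∃ A : Learner X n, DSRL μ P D ε δ n A), (n : ℕ∞)

/-- Sample complexity of distribution-specific agnostic OI. -/
def SAMPDSA {X : Type*} (μ : PMF X) (P D : Set (X → ℝ)) (ε δ : ℝ) : ℕ∞ :=
  ⨅ (n : ℕ) (_ : ∃ A : Learner X n, DSAL μ P D ε δ n A), (n : ℕ∞)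

/-- Sample complexity of distribution-free realizable OI. -/
def SAMPDFR {X : Type*} (P D : Set (X → ℝ)) (ε δ : ℝ) : ℕ∞ :=
  ⨅ (n : ℕ) (_ : ∃ A : Learner X n, DFRL P D ε δ n A), (n : ℕ∞)

/-- Sample complexity of distribution-free agnostic OI. -/
def SAMPDFA {X : Type*} (P D : Set (X → ℝ)) (ε δ : ℝ) : ℕ∞ :=
  ⨅ (n : ℕ) (_ : ∃ A : Learner X n, DFAL P D ε δ n A), (n : ℕ∞)

/-- The points `x 0, …, x (n-1)` are `γ`-fat shattered by `F`. -/
def Shatters {X : Type*} (F : Set (X → ℝ)) (γ : ℝ) {n : ℕ} (x : Fin n → X) : Prop :=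
  ∃ r : Fin n → ℝ, ∀ b : Fin n → Bool, ∃ f ∈ F,
    ∀ i, γ ≤ (if b i then (1 : ℝ) else -1) * (f (x i) - r i)

/-- The `γ`-fat-shattering dimension of `F`. -/
def fatDim {X : Type*} (F : Set (X → ℝ)) (γ : ℝ) : ℕ∞ :=
  ⨆ (n : ℕ) (_ : ∃ x : Fin n → X, Shatters F γ x), (n : ℕ∞)

end OI


open OI

/-- The domain `X = {⊥} ∪ {0,1}^m`, with `none` playing the role of `⊥`. -/
abbrev Cube (m : ℕ) := Option (Fin m → Bool)

/-- The predictor `p₁` with `p₁(⊥) = 0` and `p₁(x) = 1/2` on the cube. -/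
def pLow (m : ℕ) : Cube m → ℝ := fun x => x.elim 0 fun _ => 1 / 2

/-- The predictor `p₂` with `p₂(⊥) = 1` and `p₂(x) = 1/2` on the cube. -/
def pHigh (m : ℕ) : Cube m → ℝ := fun x => x.elim 1 fun _ => 1 / 2

/-- The distribution `μ` putting mass `1/3` on `⊥` and `2/3` uniformly on the cube. -/
def cubeDist (m : ℕ) : PMF (Cube m) :=
  (bern (2 / 3)).bind fun b =>
    if b then (PMF.uniformOfFintype (Fin m → Bool)).map some else PMF.pure none

/-- The parity distinguisher associated with `S ⊆ {1,…,m}`: it maps `⊥` to `1` and `v` in the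
cube to `(−1)^{⊕_{i∈S} v_i}`. -/
def parityD (m : ℕ) (S : Finset (Fin m)) : Cube m → ℝ :=
  fun x => x.elim 1 fun v => (-1 : ℝ) ^ (S.filter fun i => v i = true).card

/-- The class of all parity distinguishers. -/
def parityClass (m : ℕ) : Set (Cube m → ℝ) := Set.range (parityD m)

/-!
Test the learner on the `2^{m+1}` targets `t_{S,σ}`, equal to `1/2` at `⊥` and to the
deterministic labels `(1 + σ χ_S)/2` on the cube (`σ = ±1`). Against `t_{S,σ}` one of `p₁, p₂` has
advantage at most `1/6`, so a successful output `p` must satisfy `σ (p(⊥) - 1/2 + 2 p̂(S)) ≥ 1/8`.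
By Parseval at most `64` sets `S` have `|p̂(S)| ≥ 1/16`, so one output can serve many targets only
on the side `σ` of the sign of `p(⊥) - 1/2`. The sample cannot reveal `σ`: if some parity `χ_F`
equals `-1` at all cube points of the sample, the targets `(S, +)` and `(S ∆ F, -)` are consistent
with exactly the same labelled samples, and a Fourier expansion bounds the probability that no
such `F` exists by `2^n / 2^m`. Averaging the success probability `2/3` over all targets gives
`(4/3) 2^m ≤ 2^m + 65 ⋅ 2^n`, hence `m ≤ n + 8`.
-/

open OI Finset
open scoped symmDiff

lemma Finset.prod_mul_prod_eq_prod_symmDiff {ι M : Type*} [CommMonoid M] [DecidableEq ι]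
    {f : ι → M} (hf : ∀ i, f i * f i = 1) (s t : Finset ι) :
    (∏ i ∈ s, f i) * ∏ i ∈ t, f i = ∏ i ∈ s ∆ t, f i := by
  have hdisj : Disjoint (s ∆ t) (s ∩ t) := disjoint_symmDiff_inf s t
  rw [← prod_union_inter, show s ∪ t = s ∆ t ∪ s ∩ t from (symmDiff_sup_inf s t).symm,
    prod_union hdisj, mul_assoc, ← prod_mul_distrib]
  simp [hf]

lemma Finset.sum_prod_eq_prod_one_add {ι R : Type*} [Fintype ι] [CommSemiring R] (f : ι → R) :
    ∑ s : Finset ι, ∏ i ∈ s, f i = ∏ i, (1 + f i) := by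
  rw [prod_one_add, powerset_univ]

lemma PMF.sum_coe_eq_one {α : Type*} [Fintype α] (q : PMF α) : ∑ a, q a = 1 := by
  rw [← tsum_fintype (L := SummationFilter.unconditional _), q.tsum_coe]

namespace OI

variable {α ι X : Type*}

lemma bern_apply {r : ℝ} (h0 : 0 ≤ r) (h1 : r ≤ 1) (o : Bool) :
    bern r o = ENNReal.ofReal (if o then r else 1 - r) := by
  have hmin : min r.toNNReal 1 = r.toNNReal := min_eq_left (Real.toNNReal_le_one.2 h1)
  change (bif o then ((min r.toNNReal 1 : NNReal) : ℝ≥0∞)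
    else 1 - ((min r.toNNReal 1 : NNReal) : ℝ≥0∞)) = _
  rw [hmin]
  cases o
  · rw [Bool.cond_false, if_neg Bool.false_ne_true, ENNReal.ofReal_sub _ h0, ENNReal.ofReal_one]
    rfl
  · rfl

lemma exDist_apply (μ : PMF X) (p : X → ℝ) (x : X) (o : Bool) :
    exDist μ p (x, o) = μ x * bern (p x) o := by
  rw [exDist, PMF.bind_apply, tsum_eq_single x]
  · rw [PMF.map_apply, tsum_eq_single o] <;> simp_all
  · intro x' hx'
    simp [PMF.map_apply, Ne.symm hx']

lemma iid_apply (q : PMF α) : ∀ (n : ℕ) (s : Fin n → α), iid q n s = ∏ i, q (s i)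
  | 0, s => by simp [iid, Subsingleton.elim s Fin.elim0]
  | n + 1, s => by
    rw [iid, PMF.bind_apply, tsum_eq_single (Fin.tail s), PMF.map_apply, tsum_eq_single (s 0),
      Fin.cons_self_tail, if_pos rfl, iid_apply q n, Fin.prod_univ_succ, mul_comm]
    · rfl
    · intro a ha
      exact if_neg fun h => ha (by rw [h]; simp)
    · intro v hv
      refine mul_eq_zero_of_right _ (ENNReal.tsum_eq_zero.2 fun a => ?_)
      simp only [Function.comp_apply, PMF.pure_apply]
      exact mul_eq_zero_of_right _ (if_neg fun h => hv (by rw [h, Fin.tail_cons]))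

lemma pexp_eq_sum [Fintype α] (q : PMF α) (f : α → ℝ) : pexp q f = ∑ a, (q a).toReal * f a :=
  tsum_fintype _

lemma pexp_one [Fintype α] (q : PMF α) : pexp q 1 = 1 := by
  simp [pexp_eq_sum, ← ENNReal.toReal_sum fun a _ => q.apply_ne_top a, q.sum_coe_eq_one]

lemma pexp_sum [Fintype α] (q : PMF α) (K : Finset ι) (f : ι → α → ℝ) :
    pexp q (fun a => ∑ k ∈ K, f k a) = ∑ k ∈ K, pexp q (f k) := by
  simp only [pexp_eq_sum, mul_sum]
  exact sum_comm

lemma pexp_const_mul (q : PMF α) (c : ℝ) (f : α → ℝ) :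
    pexp q (fun a => c * f a) = c * pexp q f := by
  simp only [pexp, mul_left_comm _ c, tsum_mul_left]

lemma pexp_iid_prod [Fintype α] (q : PMF α) (n : ℕ) (y : Finset (Fin n)) (f : Fin n → α → ℝ) :
    pexp (iid q n) (fun x => ∏ i ∈ y, f i (x i)) = ∏ i ∈ y, pexp q (f i) := by
  have huniv (g : Fin n → α → ℝ) :
      pexp (iid q n) (fun x => ∏ i, g i (x i)) = ∏ i, pexp q (g i) := by
    simp only [pexp_eq_sum, iid_apply, ENNReal.toReal_prod, Fintype.prod_sum, prod_mul_distrib]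
  calc pexp (iid q n) (fun x => ∏ i ∈ y, f i (x i))
      = pexp (iid q n) (fun x => ∏ i, (if i ∈ y then f i else 1) (x i)) := by
        simp [ite_apply, prod_ite_mem]
    _ = ∏ i ∈ y, pexp q (f i) := by
        simp [huniv, apply_ite (pexp q), pexp_one, prod_ite_mem]

lemma prob_le_ofReal_pexp [Fintype α] (q : PMF α) (E : Set α) (g : α → ℝ) (hg : 0 ≤ g)
    (hE : ∀ a ∈ E, 1 ≤ g a) :
    prob q E ≤ ENNReal.ofReal (pexp q g) := by
  rw [pexp_eq_sum, ENNReal.ofReal_sum_of_nonneg fun a _ => mul_nonneg ENNReal.toReal_nonneg (hg a),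
    prob, PMF.toOuterMeasure_apply, tsum_fintype]
  refine sum_le_sum fun a _ => ?_
  rw [ENNReal.ofReal_mul ENNReal.toReal_nonneg, ENNReal.ofReal_toReal (q.apply_ne_top a)]
  by_cases ha : a ∈ E
  · simpa [ha] using mul_le_mul_right (ENNReal.one_le_ofReal.2 (hE a ha)) (q a)
  · simp [ha]

open Classical in
lemma sum_prob_le_of_card_le (q : PMF α) (K : Finset ι) (E : ι → Set α) (B : ℕ)
    (h : ∀ a, #{k ∈ K | a ∈ E k} ≤ B) :
    ∑ k ∈ K, prob q (E k) ≤ B := calc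
  ∑ k ∈ K, prob q (E k) = ∑' a, q a * (#{k ∈ K | a ∈ E k} : ℝ≥0∞) := by
      simp only [prob, PMF.toOuterMeasure_apply, Set.indicator_apply]
      rw [← Summable.tsum_finsetSum fun _ _ => ENNReal.summable]
      refine tsum_congr fun a => ?_
      rw [card_filter, Nat.cast_sum, mul_sum]
      simp
  _ ≤ ∑' a, q a * B := ENNReal.tsum_le_tsum fun a => mul_le_mul_right (by exact_mod_cast h a) _
  _ = B := by rw [ENNReal.tsum_mul_right, q.tsum_coe, one_mul]

lemma sum_iid_exDist_mul_fst [Fintype X] (μ : PMF X) (p : X → ℝ) (n : ℕ)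
    (f : (Fin n → X) → ℝ≥0∞) :
    ∑ s : Fin n → X × Bool, iid (exDist μ p) n s * f (fun i => (s i).1)
      = ∑ x, iid μ n x * f x := by
  rw [← (Equiv.arrowProdEquivProdArrow (Fin n) (fun _ => X) (fun _ => Bool)).symm.sum_comp,
    Fintype.sum_prod_type]
  refine sum_congr rfl fun x _ => ?_
  simp only [Equiv.arrowProdEquivProdArrow, Equiv.coe_fn_symm_mk, iid_apply, exDist_apply,
    prod_mul_distrib]
  rw [← sum_mul, ← mul_sum, ← Fintype.prod_sum]
  simp only [PMF.sum_coe_eq_one, prod_const_one, mul_one]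

lemma prob_outDist [Fintype X] (μ : PMF X) (p : X → ℝ) {n : ℕ} (A : Learner X n)
    (E : Set (X → ℝ)) :
    prob (outDist μ p A) E = ∑ s, iid (exDist μ p) n s * prob (A s) E := by
  rw [prob, outDist, PMF.toOuterMeasure_bind_apply, tsum_fintype]
  rfl

lemma abs_inn_le_dnorm (μ : PMF X) {F : Set (X → ℝ)} (hF : F.Finite) (f : X → ℝ) {g : X → ℝ}
    (hg : g ∈ F) : |inn μ f g| ≤ dnorm μ F f :=
  le_csSup (hF.image _).bddAbove ⟨g, hg, rfl⟩

lemma dnorm_le (μ : PMF X) (F : Set (X → ℝ)) (f : X → ℝ) {c : ℝ} (hc : 0 ≤ c)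
    (h : ∀ g ∈ F, |inn μ f g| ≤ c) : dnorm μ F f ≤ c :=
  Real.sSup_le (by rintro _ ⟨g, hg, rfl⟩; exact h g hg) hc

lemma agTarget_le (μ : PMF X) {P : Set (X → ℝ)} (D : Set (X → ℝ)) (p : X → ℝ) {p' : X → ℝ}
    (hp' : p' ∈ P) : agTarget μ P D p ≤ dnorm μ D (p' - p) := by
  refine csInf_le ⟨0, ?_⟩ ⟨p', hp', rfl⟩
  rintro _ ⟨q, -, rfl⟩
  exact Real.sSup_nonneg fun _ ⟨_, _, h⟩ => h ▸ abs_nonneg _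

end OI

namespace Cube

variable {m : ℕ}

/-! ### Walsh characters -/

/-- The value `0` at `⊥` makes `character S ⊥ = [S = ∅]`, so that every character other than the
constant one has mean zero under `cubeDist m`. -/
def coordSign (j : Fin m) (x : Cube m) : ℝ := x.elim 0 fun v => if v j then -1 else 1

def character (S : Finset (Fin m)) (x : Cube m) : ℝ := ∏ j ∈ S, coordSign j x

lemma abs_coordSign_le (j : Fin m) (x : Cube m) : |coordSign j x| ≤ 1 := by
  cases x <;> simp [coordSign, apply_ite]

lemma coordSign_some_mul_self (j : Fin m) (v : Fin m → Bool) :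
    coordSign j (some v) * coordSign j (some v) = 1 := by
  by_cases h : v j <;> simp [coordSign, h]

lemma character_some (S : Finset (Fin m)) (v : Fin m → Bool) :
    character S (some v) = parityD m S (some v) := by
  simp [character, parityD, coordSign, prod_ite, prod_const]

lemma character_some_eq_one_or_neg_one (S : Finset (Fin m)) (v : Fin m → Bool) :
    character S (some v) = 1 ∨ character S (some v) = -1 := by
  rw [character_some, parityD, Option.elim_some]
  exact neg_one_pow_eq_or ℝ _

lemma character_none (S : Finset (Fin m)) : character S none = if S = ∅ then 1 else 0 := by
  rcases S.eq_empty_or_nonempty with rfl | ⟨j, hj⟩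
  · simp [character]
  · rw [if_neg (S.ne_empty_of_mem hj)]
    exact prod_eq_zero hj rfl

lemma character_some_mul (S T : Finset (Fin m)) (v : Fin m → Bool) :
    character S (some v) * character T (some v) = character (S ∆ T) (some v) :=
  prod_mul_prod_eq_prod_symmDiff (coordSign_some_mul_self · v) S T

lemma sum_character_some (S : Finset (Fin m)) :
    ∑ v, character S (some v) = if S = ∅ then 2 ^ m else 0 := calc
  ∑ v, character S (some v)
      = ∑ v : Fin m → Bool, ∏ j, (if j ∈ S then (if v j then -1 else 1) else 1 : ℝ) := by
        simp [character, coordSign, prod_ite_mem]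
  _ = ∏ j, (if j ∈ S then 0 else 2 : ℝ) := by
        rw [← Fintype.prod_sum fun j (b : Bool) => (if j ∈ S then (if b then -1 else 1) else 1 : ℝ)]
        refine prod_congr rfl fun j _ => ?_
        split_ifs <;> norm_num
  _ = if S = ∅ then 2 ^ m else 0 := by
        rcases S.eq_empty_or_nonempty with rfl | ⟨j, hj⟩
        · simp
        · rw [if_neg (S.ne_empty_of_mem hj)]
          exact prod_eq_zero (mem_univ j) (if_pos hj)

lemma sum_character_some_mul (S T : Finset (Fin m)) :
    ∑ v, character S (some v) * character T (some v) = if S = T then 2 ^ m else 0 := by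
  simp only [character_some_mul, sum_character_some, symmDiff_eq_empty]

lemma sum_prod_character {ι : Type*} (y : Finset ι) (x : ι → Cube m) :
    ∑ S, ∏ i ∈ y, character S (x i) = ∏ j, (1 + ∏ i ∈ y, coordSign j (x i)) := by
  simp only [character, prod_comm (s := y), sum_prod_eq_prod_one_add]

lemma sum_prod_character_nonneg {ι : Type*} (y : Finset ι) (x : ι → Cube m) :
    0 ≤ ∑ S, ∏ i ∈ y, character S (x i) := by
  rw [sum_prod_character]
  refine prod_nonneg fun j _ => ?_
  have := (abs_prod y fun i => coordSign j (x i)).trans_le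
    (prod_le_one (fun _ _ => abs_nonneg _) fun i _ => abs_coordSign_le j (x i))
  linarith [neg_abs_le (∏ i ∈ y, coordSign j (x i))]

lemma sum_character_some_mul_character_some (v w : Fin m → Bool) :
    ∑ S, character S (some v) * character S (some w) = if v = w then 2 ^ m else 0 := by
  simp only [character, ← prod_mul_distrib, sum_prod_eq_prod_one_add]
  by_cases hvw : v = w
  · subst hvw
    simp [coordSign_some_mul_self, one_add_one_eq_two]
  · obtain ⟨j, hj⟩ := Function.ne_iff.1 hvw
    rw [if_neg hvw]
    refine prod_eq_zero (mem_univ j) ?_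
    cases hv : v j <;> cases hw : w j <;> simp_all [coordSign]

lemma sum_sq_sum_mul_character (g : (Fin m → Bool) → ℝ) :
    ∑ S, (∑ v, g v * character S (some v)) ^ 2 = 2 ^ m * ∑ v, g v ^ 2 := by
  simp only [sq, sum_mul_sum]
  rw [sum_comm, mul_sum]
  refine sum_congr rfl fun v _ => ?_
  rw [sum_comm]
  simp only [show ∀ S w, g v * character S (some v) * (g w * character S (some w))
      = g v * g w * (character S (some v) * character S (some w)) from fun _ _ => by ring,
    ← mul_sum, sum_character_some_mul_character_some]
  simp [mul_comm]

lemma toReal_cubeDist_none : (cubeDist m none).toReal = 1 / 3 := by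
  have : cubeDist m none = bern (2 / 3) false := by
    simp [cubeDist, PMF.bind_apply, PMF.map_apply, tsum_fintype]
  rw [this, bern_apply (by norm_num) (by norm_num)]
  norm_num

lemma toReal_cubeDist_some (v : Fin m → Bool) :
    (cubeDist m (some v)).toReal = 2 / 3 / 2 ^ m := by
  have : cubeDist m (some v) = bern (2 / 3) true * (2 ^ m)⁻¹ := by
    simp [cubeDist, PMF.bind_apply, PMF.map_apply, tsum_fintype]
  rw [this, bern_apply (by norm_num) (by norm_num)]
  simp [div_eq_mul_inv]

lemma pexp_cubeDist (F : Cube m → ℝ) :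
    pexp (cubeDist m) F = F none / 3 + 2 / 3 / 2 ^ m * ∑ v, F (some v) := by
  rw [pexp_eq_sum, Fintype.sum_option, toReal_cubeDist_none, mul_sum]
  simp only [toReal_cubeDist_some]
  ring

lemma pexp_cubeDist_character (S : Finset (Fin m)) :
    pexp (cubeDist m) (character S) = if S = ∅ then 1 else 0 := by
  rw [pexp_cubeDist, character_none, sum_character_some]
  split_ifs <;> field_simp <;> ring

/-! ### The hard targets -/

def boolSign (σ : Bool) : ℝ := if σ then 1 else -1

def target (S : Finset (Fin m)) (σ : Bool) (x : Cube m) : ℝ :=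
  x.elim (1 / 2) fun v => (1 + boolSign σ * character S (some v)) / 2

def botBias (p : Cube m → ℝ) : ℝ := p none - 1 / 2

def walshCoeff (p : Cube m → ℝ) (T : Finset (Fin m)) : ℝ :=
  (∑ v, (p (some v) - 1 / 2) * character T (some v)) / 2 ^ m

lemma predictor_target (S : Finset (Fin m)) (σ : Bool) : Predictor (target S σ) := by
  rintro (_ | v)
  · norm_num [target]
  · rcases character_some_eq_one_or_neg_one S v with h | h <;>
      cases σ <;> norm_num [target, boolSign, h]

lemma inn_sub_target (p : Cube m → ℝ) (S T : Finset (Fin m)) (σ : Bool) :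
    inn (cubeDist m) (p - target S σ) (parityD m T)
      = botBias p / 3 + 2 / 3 * (walshCoeff p T - boolSign σ / 2 * if S = T then 1 else 0) := by
  have hsome (v : Fin m → Bool) : (p - target S σ) (some v) * parityD m T (some v)
      = (p (some v) - 1 / 2) * character T (some v)
        - boolSign σ / 2 * (character S (some v) * character T (some v)) := by
    simp only [Pi.sub_apply, target, Option.elim_some, ← character_some]
    ring
  rw [inn, pexp_cubeDist, sum_congr rfl fun v _ => hsome v, sum_sub_distrib, ← mul_sum,
    sum_character_some_mul, walshCoeff, botBias]
  simp only [Pi.sub_apply, target, parityD, Option.elim_none]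
  split_ifs <;> field_simp
  ring

lemma agTarget_target_le (S : Finset (Fin m)) (σ : Bool) :
    agTarget (cubeDist m) {pLow m, pHigh m} (parityClass m) (target S σ) ≤ 1 / 6 := by
  set q := if σ then pHigh m else pLow m
  have hq : q ∈ ({pLow m, pHigh m} : Set (Cube m → ℝ)) := by cases σ <;> simp [q]
  refine (agTarget_le _ _ _ hq).trans (dnorm_le _ _ _ (by norm_num) ?_)
  rintro _ ⟨T, rfl⟩
  have hbias : botBias q = boolSign σ / 2 := by
    cases σ <;> norm_num [q, botBias, boolSign, pLow, pHigh]
  have hcoeff : walshCoeff q T = 0 := by cases σ <;> simp [q, walshCoeff, pLow, pHigh]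
  rw [inn_sub_target, hbias, hcoeff]
  cases σ <;> split_ifs <;> norm_num [boolSign, abs_div]

def goodSet (S : Finset (Fin m)) (σ : Bool) : Set (Cube m → ℝ) :=
  {p | Predictor p ∧ dnorm (cubeDist m) (parityClass m) (p - target S σ)
    ≤ agTarget (cubeDist m) {pLow m, pHigh m} (parityClass m) (target S σ) + 1 / 8}

/-- Only the test against `χ_S` itself is needed. -/
lemma le_of_mem_goodSet {p : Cube m → ℝ} {S : Finset (Fin m)} {σ : Bool}
    (hp : p ∈ goodSet S σ) : 1 / 8 ≤ boolSign σ * (botBias p + 2 * walshCoeff p S) := by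
  have h := (abs_inn_le_dnorm _ (Set.finite_range _) _ ⟨S, rfl⟩).trans
    (hp.2.trans (add_le_add_left (agTarget_target_le S σ) _))
  rw [inn_sub_target, if_pos rfl, abs_le] at h
  cases σ <;> norm_num [boolSign] at h ⊢ <;> linarith [h.1, h.2]

lemma sum_walshCoeff_sq_le {p : Cube m → ℝ} (hp : Predictor p) :
    ∑ S, walshCoeff p S ^ 2 ≤ 1 / 4 := by
  have hpt (v : Fin m → Bool) : (p (some v) - 1 / 2) ^ 2 ≤ 1 / 4 := by
    nlinarith [(hp (some v)).1, (hp (some v)).2]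
  have h2m : (0 : ℝ) < 2 ^ m := by positivity
  calc ∑ S, walshCoeff p S ^ 2 = (∑ v, (p (some v) - 1 / 2) ^ 2) / 2 ^ m := by
        simp only [walshCoeff, div_pow, ← sum_div, sum_sq_sum_mul_character]
        rw [sq (2 ^ m : ℝ), mul_div_mul_left _ _ h2m.ne']
    _ ≤ (∑ _v : Fin m → Bool, (1 / 4 : ℝ)) / 2 ^ m := by gcongr with v; exact hpt v
    _ = 1 / 4 := by simp [field]

lemma card_le_of_boolSign_mul_botBias_nonpos {p : Cube m → ℝ} (hp : Predictor p) {σ : Bool}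
    (hσ : boolSign σ * botBias p ≤ 0) :
    #{S | 1 / 8 ≤ boolSign σ * (botBias p + 2 * walshCoeff p S)} ≤ 64 := by
  set L : Finset (Finset (Fin m)) := {S | 1 / 8 ≤ boolSign σ * (botBias p + 2 * walshCoeff p S)}
  have hlarge : ∀ S ∈ L, 1 / 256 ≤ walshCoeff p S ^ 2 := by
    intro S hS
    have := (mem_filter.1 hS).2
    cases σ <;> norm_num [boolSign] at this hσ <;> nlinarith
  have : (#L : ℝ) / 256 ≤ 1 / 4 := calc
    (#L : ℝ) / 256 = ∑ S ∈ L, 1 / 256 := by rw [sum_const, nsmul_eq_mul, mul_one_div]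
    _ ≤ ∑ S ∈ L, walshCoeff p S ^ 2 := sum_le_sum hlarge
    _ ≤ ∑ S, walshCoeff p S ^ 2 :=
        sum_le_sum_of_subset_of_nonneg (subset_univ _) fun _ _ _ => sq_nonneg _
    _ ≤ 1 / 4 := sum_walshCoeff_sq_le hp
  exact_mod_cast (by linarith : (#L : ℝ) ≤ 64)

/-! ### Samples -/

def Consistent (S : Finset (Fin m)) (σ : Bool) (z : Cube m × Bool) : Prop :=
  bern (target S σ z.1) z.2 ≠ 0

instance (S : Finset (Fin m)) (σ : Bool) : DecidablePred (Consistent S σ) :=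
  fun _ => inferInstanceAs (Decidable (_ ≠ 0))

/-- The common probability of a labelled point under every target consistent with it. -/
def pointWeight (x : Cube m) : ℝ≥0∞ := cubeDist m x * x.elim (1 / 2) fun _ => 1

variable {n : ℕ}

def sampleWeight (s : Fin n → Cube m × Bool) : ℝ≥0∞ := ∏ i, pointWeight (s i).1

def consistentCount (σ : Bool) (s : Fin n → Cube m × Bool) : ℕ :=
  #{S | ∀ i, Consistent S σ (s i)}

def consistentTargets (s : Fin n → Cube m × Bool) : Finset (Finset (Fin m) × Bool) :=
  {h | ∀ i, Consistent h.1 h.2 (s i)}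

lemma exDist_target (S : Finset (Fin m)) (σ : Bool) (z : Cube m × Bool) :
    exDist (cubeDist m) (target S σ) z = pointWeight z.1 * if Consistent S σ z then 1 else 0 := by
  obtain ⟨x | v, o⟩ := z
  · have : bern (target S σ none) o = 1 / 2 := by
      cases o <;> norm_num [target, bern_apply, ENNReal.ofReal_div_of_pos]
    simp [exDist_apply, Consistent, pointWeight, this]
  · have h01 : bern (target S σ (some v)) o = 0 ∨ bern (target S σ (some v)) o = 1 := by
      rcases character_some_eq_one_or_neg_one S v with h | h <;>
        cases σ <;> cases o <;> norm_num [target, boolSign, h, bern_apply]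
    rcases h01 with h | h <;> simp [exDist_apply, Consistent, pointWeight, h]

lemma iid_exDist_target (S : Finset (Fin m)) (σ : Bool) (s : Fin n → Cube m × Bool) :
    iid (exDist (cubeDist m) (target S σ)) n s
      = sampleWeight s * if ∀ i, Consistent S σ (s i) then 1 else 0 := by
  simp only [iid_apply, exDist_target, prod_mul_distrib, prod_boole, mem_univ, true_implies,
    sampleWeight]

lemma sum_sampleWeight_le : ∑ s : Fin n → Cube m × Bool, sampleWeight s ≤ 2 ^ n := by
  have hpoint : ∑ z : Cube m × Bool, pointWeight z.1 ≤ 2 := calc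
    ∑ z : Cube m × Bool, pointWeight z.1 = ∑ x, ∑ _o : Bool, pointWeight x :=
      Fintype.sum_prod_type _
    _ = 2 * ∑ x, pointWeight x := by
      rw [mul_sum]
      exact sum_congr rfl fun x _ => by rw [Fintype.sum_bool, two_mul]
    _ ≤ 2 * ∑ x, cubeDist m x := by
      gcongr with x
      cases x
      · exact mul_le_of_le_one_right' (by norm_num)
      · simp [pointWeight]
    _ = 2 := by rw [PMF.sum_coe_eq_one, mul_one]
  calc ∑ s : Fin n → Cube m × Bool, sampleWeight s
      = ∏ _i : Fin n, ∑ z : Cube m × Bool, pointWeight z.1 := by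
        rw [Fintype.prod_sum]
        rfl
    _ ≤ ∏ _i : Fin n, (2 : ℝ≥0∞) := prod_le_prod' fun _ _ => hpoint
    _ = 2 ^ n := by simp

lemma sum_sampleWeight_mul_consistentCount (σ : Bool) (E : Set (Fin n → Cube m))
    [DecidablePred (· ∈ E)] :
    ∑ s, sampleWeight s * (if (fun i => (s i).1) ∈ E then (consistentCount σ s : ℝ≥0∞) else 0)
      = 2 ^ m * prob (iid (cubeDist m) n) E := by
  have hcount (s : Fin n → Cube m × Bool) :
      (consistentCount σ s : ℝ≥0∞) = ∑ S, if ∀ i, Consistent S σ (s i) then 1 else 0 := by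
    simp only [consistentCount, card_filter, Nat.cast_sum, Nat.cast_ite, Nat.cast_one,
      Nat.cast_zero]
  have hprob (S : Finset (Fin m)) : ∑ s, iid (exDist (cubeDist m) (target S σ)) n s
      * (if (fun i => (s i).1) ∈ E then 1 else 0) = prob (iid (cubeDist m) n) E := by
    rw [sum_iid_exDist_mul_fst (f := fun x => if x ∈ E then 1 else 0), prob,
      PMF.toOuterMeasure_apply, tsum_fintype]
    simp [Set.indicator_apply]
  calc ∑ s, sampleWeight s * (if (fun i => (s i).1) ∈ E then (consistentCount σ s : ℝ≥0∞) else 0)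
      = ∑ S : Finset (Fin m), ∑ s, iid (exDist (cubeDist m) (target S σ)) n s
          * (if (fun i => (s i).1) ∈ E then 1 else 0) := by
        rw [sum_comm]
        refine sum_congr rfl fun s _ => ?_
        simp only [iid_exDist_target, hcount, ← sum_mul, ← mul_sum]
        split_ifs <;> simp
    _ = 2 ^ m * prob (iid (cubeDist m) n) E := by
        rw [sum_congr rfl fun S _ => hprob S, sum_const, card_univ, Fintype.card_finset,
          Fintype.card_fin, nsmul_eq_mul, Nat.cast_pow, Nat.cast_ofNat]

/-! ### Flipping the sign of the target -/

def Flippable (x : Fin n → Cube m) : Prop :=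
  ∃ F : Finset (Fin m), ∀ i v, x i = some v → character F (some v) = -1

instance : DecidablePred (Flippable (m := m) (n := n)) :=
  fun _ => inferInstanceAs (Decidable (∃ _, _))

lemma target_symmDiff_false {F : Finset (Fin m)} {x : Cube m}
    (hF : ∀ v, x = some v → character F (some v) = -1) (S : Finset (Fin m)) :
    target (S ∆ F) false x = target S true x := by
  cases x with
  | none => rfl
  | some v => simp [target, boolSign, ← character_some_mul, hF v rfl]

lemma consistentCount_true_eq_false {s : Fin n → Cube m × Bool}
    (h : Flippable fun i => (s i).1) : consistentCount true s = consistentCount false s := by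
  obtain ⟨F, hF⟩ := h
  have hcons (S : Finset (Fin m)) :
      (∀ i, Consistent (S ∆ F) false (s i)) ↔ ∀ i, Consistent S true (s i) := by
    simp only [Consistent, target_symmDiff_false (hF _)]
  refine (card_nbij' (· ∆ F) (· ∆ F) (fun S hS => ?_) (fun S hS => ?_)
    (fun S _ => symmDiff_symmDiff_cancel_right F S)
    (fun S _ => symmDiff_symmDiff_cancel_right F S)).symm
  · simp only [coe_filter, mem_univ, true_and, Set.mem_ofPred_eq] at hS ⊢
    rw [← hcons, symmDiff_symmDiff_cancel_right]
    exact hS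
  · simp only [coe_filter, mem_univ, true_and, Set.mem_ofPred_eq] at hS ⊢
    exact (hcons S).2 hS

lemma max_consistentCount_le (s : Fin n → Cube m × Bool) :
    max (consistentCount true s) (consistentCount false s)
      ≤ consistentCount true s
        + if (fun i => (s i).1) ∈ {x | ¬Flippable x} then consistentCount false s else 0 := by
  split_ifs with h
  · omega
  · rw [consistentCount_true_eq_false (not_not.1 h), max_self, add_zero]

/-- Expand `∏ᵢ (1 - χ_S(xᵢ)) = 0`, summed over `S`, into the monomials `∏_{i ∈ y} χ_S(xᵢ)`: the
sums of their `S`-sums over odd and over even `y` agree, and `y = ∅` alone contributes `2 ^ m`. -/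
lemma two_pow_le_sum_odd_of_not_flippable {x : Fin n → Cube m} (hx : ¬Flippable x) :
    (2 : ℝ) ^ m ≤ ∑ y : Finset (Fin n) with Odd #y, ∑ S, ∏ i ∈ y, character S (x i) := by
  set D : Finset (Fin n) → ℝ := fun y => ∑ S, ∏ i ∈ y, character S (x i)
  have hx' : ∀ S, ∃ i v, x i = some v ∧ character S (some v) ≠ -1 := by
    simpa [Flippable] using hx
  have hzero (S : Finset (Fin m)) : ∏ i, (1 + -character S (x i)) = 0 := by
    obtain ⟨i, v, hxi, hv⟩ := hx' S
    refine prod_eq_zero (mem_univ i) ?_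
    rw [hxi, (character_some_eq_one_or_neg_one S v).resolve_right hv, add_neg_cancel]
  have hexpand : ∑ y, (-1) ^ #y * D y = 0 := by
    simp only [D, mul_sum, ← prod_const, ← prod_mul_distrib, neg_one_mul]
    rw [sum_comm]
    simp [sum_prod_eq_prod_one_add, hzero]
  have hsigned : ∑ y, (-1) ^ #y * D y
      = ∑ y : Finset (Fin n) with ¬Odd #y, D y - ∑ y : Finset (Fin n) with Odd #y, D y := by
    rw [← sum_filter_not_add_sum_filter _ (fun y => Odd #y), sub_eq_add_neg, ← sum_neg_distrib]
    congr 1 <;> refine sum_congr rfl fun y hy => ?_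
    · rw [(Nat.not_odd_iff_even.1 (mem_filter.1 hy).2).neg_one_pow, one_mul]
    · rw [(mem_filter.1 hy).2.neg_one_pow, neg_one_mul]
  have hempty : (2 : ℝ) ^ m ≤ ∑ y : Finset (Fin n) with ¬Odd #y, D y := by
    refine le_of_eq_of_le ?_ (single_le_sum (fun y _ => sum_prod_character_nonneg y x)
      (mem_filter.2 ⟨mem_univ ∅, by simp⟩))
    simp [card_univ]
  linarith

lemma pexp_sum_prod_character {y : Finset (Fin n)} (hy : y.Nonempty) :
    pexp (iid (cubeDist m) n) (fun x => ∑ S, ∏ i ∈ y, character S (x i)) = 1 := by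
  simp only [pexp_sum, pexp_iid_prod, pexp_cubeDist_character, prod_const]
  rw [sum_eq_single ∅ (fun S _ hS => by simp [hS, hy.card_pos.ne']) (by simp)]
  simp

lemma prob_not_flippable_le :
    prob (iid (cubeDist m) n) {x | ¬Flippable x} ≤ ENNReal.ofReal (2 ^ n / 2 ^ m) := by
  set g : (Fin n → Cube m) → ℝ :=
    fun x => ∑ y : Finset (Fin n) with Odd #y, (2 ^ m)⁻¹ * ∑ S, ∏ i ∈ y, character S (x i)
  have hpexp : pexp (iid (cubeDist m) n) g ≤ 2 ^ n / 2 ^ m := calc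
    pexp (iid (cubeDist m) n) g = ∑ y : Finset (Fin n) with Odd #y, (2 ^ m)⁻¹ := by
      rw [pexp_sum]
      refine sum_congr rfl fun y hy => ?_
      rw [pexp_const_mul, pexp_sum_prod_character (card_pos.1 (mem_filter.1 hy).2.pos), mul_one]
    _ ≤ ∑ _y : Finset (Fin n), (2 ^ m)⁻¹ :=
      sum_le_sum_of_subset_of_nonneg (filter_subset _ _) fun _ _ _ => by positivity
    _ = 2 ^ n / 2 ^ m := by simp [card_univ, div_eq_mul_inv]
  refine (prob_le_ofReal_pexp _ _ g (fun x => ?_) fun x hx => ?_).trans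
    (ENNReal.ofReal_le_ofReal hpexp)
  · exact sum_nonneg fun y _ => mul_nonneg (by positivity) (sum_prod_character_nonneg y x)
  · rw [show g x = _ from (mul_sum _ _ _).symm, inv_mul_eq_div, one_le_div (by positivity)]
    exact two_pow_le_sum_odd_of_not_flippable hx

/-! ### Counting successes -/

open Classical in
lemma card_consistentTargets_mem_goodSet_le (s : Fin n → Cube m × Bool) (p : Cube m → ℝ) :
    #{h ∈ consistentTargets s | p ∈ goodSet h.1 h.2}
      ≤ max (consistentCount true s) (consistentCount false s) + 64 := by
  by_cases hp : Predictor p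
  swap
  · simp [goodSet, hp]
  set σ := decide (botBias p ≤ 0)
  have hσ : boolSign σ * botBias p ≤ 0 := by
    by_cases h : botBias p ≤ 0
    · simp [σ, h, boolSign]
    · simp only [σ, h, decide_false, boolSign, Bool.false_eq_true, if_false]
      linarith
  have hsub : {h ∈ consistentTargets s | p ∈ goodSet h.1 h.2}
      ⊆ ({S | ∀ i, Consistent S (!σ) (s i)} : Finset _) ×ˢ {!σ} ∪
        ({S | 1 / 8 ≤ boolSign σ * (botBias p + 2 * walshCoeff p S)} : Finset _) ×ˢ {σ} := by
    rintro ⟨S, τ⟩ h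
    simp only [consistentTargets, mem_filter, mem_univ, true_and] at h
    by_cases hτ : τ = σ
    · subst hτ
      simpa using le_of_mem_goodSet h.2
    · simp [Bool.eq_not_of_ne hτ ▸ h.1, Bool.eq_not_of_ne hτ]
  refine (card_le_card hsub).trans ((card_union_le _ _).trans ?_)
  simp only [card_product, card_singleton, mul_one]
  refine add_le_add ?_ (card_le_of_boolSign_mul_botBias_nonpos hp hσ)
  cases σ
  · exact le_max_left _ _
  · exact le_max_right _ _

lemma sum_prob_outDist_goodSet_le (A : Learner (Cube m) n) :
    ∑ h : Finset (Fin m) × Bool, prob (outDist (cubeDist m) (target h.1 h.2) A) (goodSet h.1 h.2)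
      ≤ 2 ^ m + 2 ^ m * ENNReal.ofReal (2 ^ n / 2 ^ m) + 64 * 2 ^ n := calc
  _ = ∑ s, sampleWeight s * ∑ h ∈ consistentTargets s, prob (A s) (goodSet h.1 h.2) := by
      simp only [prob_outDist, iid_exDist_target, consistentTargets, sum_filter, mul_sum,
        mul_assoc, ite_mul, one_mul, zero_mul]
      exact sum_comm
  _ ≤ ∑ s, sampleWeight s * (consistentCount true s
        + (if (fun i => (s i).1) ∈ {x | ¬Flippable x} then (consistentCount false s : ℝ≥0∞)
          else 0) + 64) := by
      gcongr with s
      refine (sum_prob_le_of_card_le (A s) _ _ _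
        (card_consistentTargets_mem_goodSet_le s)).trans ?_
      exact_mod_cast Nat.add_le_add_right (max_consistentCount_le s) 64
  _ = 2 ^ m + 2 ^ m * prob (iid (cubeDist m) n) {x | ¬Flippable x}
        + 64 * ∑ s, sampleWeight s := by
      have hall := sum_sampleWeight_mul_consistentCount true (Set.univ : Set (Fin n → Cube m))
      simp only [Set.mem_univ, if_true, prob,
        (PMF.toOuterMeasure_apply_eq_one_iff _ _).2 (Set.subset_univ _), mul_one] at hall
      rw [← sum_sampleWeight_mul_consistentCount false, ← hall, mul_sum, ← sum_add_distrib,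
        ← sum_add_distrib]
      exact sum_congr rfl fun s _ => by ring
  _ ≤ 2 ^ m + 2 ^ m * ENNReal.ofReal (2 ^ n / 2 ^ m) + 64 * 2 ^ n := by
      gcongr
      · exact prob_not_flippable_le
      · exact sum_sampleWeight_le

lemma two_pow_le_of_DSAL (A : Learner (Cube m) n)
    (hA : DSAL (cubeDist m) {pLow m, pHigh m} (parityClass m) (1 / 8) (1 / 3) n A) :
    (2 : ℝ) ^ m ≤ 195 * 2 ^ n := by
  have hsucc (h : Finset (Fin m) × Bool) : ENNReal.ofReal (2 / 3)
      ≤ prob (outDist (cubeDist m) (target h.1 h.2) A) (goodSet h.1 h.2) := by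
    have := hA (target h.1 h.2) (predictor_target h.1 h.2)
    rwa [AchievesAg, show (1 : ℝ) - 1 / 3 = 2 / 3 by norm_num] at this
  have key := (sum_le_sum fun h _ => hsucc h).trans (sum_prob_outDist_goodSet_le A)
  simp only [sum_const, card_univ, Fintype.card_prod, Fintype.card_finset, Fintype.card_fin,
    Fintype.card_bool, nsmul_eq_mul] at key
  have hreal := ENNReal.toReal_mono (by finiteness) key
  rw [ENNReal.toReal_add (by finiteness) (by finiteness),
    ENNReal.toReal_add (by finiteness) (by finiteness)] at hreal
  simp only [ENNReal.toReal_mul, ENNReal.toReal_pow, ENNReal.toReal_ofNat, Nat.cast_mul,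
    Nat.cast_pow, Nat.cast_ofNat, ENNReal.toReal_ofReal (by positivity : (0 : ℝ) ≤ 2 / 3),
    ENNReal.toReal_ofReal (by positivity : (0 : ℝ) ≤ 2 ^ n / 2 ^ m)] at hreal
  field_simp at hreal
  linarith

end Cube

theorem statement_17_general (m : ℕ) (n : ℕ) (A : Learner (Cube m) n)
    (hA : DSAL (cubeDist m) {pLow m, pHigh m} (parityClass m) (1 / 8) (1 / 3) n A) :
    (m : ℝ) - 20 ≤ (n : ℝ) := by
  have hpow : (2 : ℝ) ^ m < 2 ^ (n + 8) := by
    refine (Cube.two_pow_le_of_DSAL A hA).trans_lt ?_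
    rw [pow_add]
    linarith [pow_pos (two_pos : (0 : ℝ) < 2) n]
  have hmn : m < n + 8 := (pow_lt_pow_iff_right₀ one_lt_two).1 hpow
  have : (m : ℝ) < n + 8 := by exact_mod_cast hmn
  linarith

/-- with `P = {p₁,p₂}`, `D` the parity distinguishers, and `μ` as above, the
distribution-specific agnostic OI sample complexity satisfies
`SAMP-DS-A(P, D, 1/8, 1/3, μ) ≥ m − 20`: any `n`-sample agnostic learner has `n ≥ m − 20`. -/
theorem statement_17 (m : ℕ) (hm : 0 < m) (n : ℕ) (A : Learner (Cube m) n)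
    (hA : DSAL (cubeDist m) {pLow m, pHigh m} (parityClass m) (1 / 8) (1 / 3) n A) :
    (m : ℝ) - 20 ≤ (n : ℝ) :=
  statement_17_general m n A hA
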